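/- The sets S_i are uniquely characterized by their recursion: if (T_i)_{i∈I} is any family of subsets of ℝ^n satisfying T_i = {x_i} ∪ ⋃_{j∈I} ⋃_{m∈E_{ji}} [x_i, T_j + m] for all i ∈ I (with [x, S] = {t·x + (1−t)·y : y ∈ S, t ∈ [0,1]}), then T_i = S_i for all i ∈ I. -/

import Mathlib

open scoped BigOperators
open MeasureTheory

noncomputable section

/-- `ℤ^n`, the exponent lattice. -/
abbrev Zn (n : ℕ) : Type := Fin n → ℤ

/-- `ℝ^n`. -/
abbrev Rn (n : ℕ) : Type := Fin n → ℝ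

/-- The Laurent polynomial ring `R_n = ℂ[z_1^{±1},…,z_n^{±1}]`, realized as the group
algebra of `ℤ^n` over `ℂ`. -/
abbrev LaurentRing (n : ℕ) : Type := AddMonoidAlgebra ℂ (Zn n)

/-- The embedding `ℤ^n → ℝ^n`. -/
def zToR {n : ℕ} (m : Zn n) : Rn n := fun j => (m j : ℝ)

/-- A bounded based sequence `F^•` of finite-rank free `R_n`-modules: a finite index set
`I = ⊔_k I_k` (with `I_k = ∅` for `k > 0` and `I_0 ≠ ∅`), recorded via a degree function,
together with the matrix entries `d^k_{ij} ∈ R_n` of the maps `F^k → F^{k+1}`. -/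
structure BasedSeq (n : ℕ) where
  I : Type
  fintypeI : Fintype I
  deg : I → ℤ
  deg_nonpos : ∀ i, deg i ≤ 0
  exists_deg_zero : ∃ i, deg i = 0
  d : I → I → LaurentRing n
  d_eq_zero : ∀ i j, deg i ≠ deg j + 1 → d i j = 0

attribute [instance] BasedSeq.fintypeI

/-- Chains witnessing membership in `E_{ij}`: `EChain F i j m` holds iff there is a chain
`j = i_0, i_1, …, i_k = i` with `deg i_ℓ = deg i_{ℓ-1} + 1` at each step, exponents
`m_ℓ` in the support of the corresponding matrix entry, and `m = m_1 + ⋯ + m_k`. -/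
inductive EChain {n : ℕ} (F : BasedSeq n) : F.I → F.I → Zn n → Prop where
  | base {i j : F.I} {m : Zn n} :
      F.deg i = F.deg j + 1 → m ∈ (F.d i j).coeff.support → EChain F i j m
  | step {i j k : F.I} {m m' : Zn n} :
      EChain F j k m → F.deg i = F.deg j + 1 → m' ∈ (F.d i j).coeff.support →
      EChain F i k (m + m')

/-- The subset `E_{ij} ⊆ ℤ^n`. -/
def Eset {n : ℕ} (F : BasedSeq n) (i j : F.I) : Set (Zn n) := {m | EChain F i j m}

/-- The condition `(m_1, …, m_k) ∈ E_{i_1 i_0} × ⋯ × E_{i_k i_{k-1}}`. -/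
def goodTuple {n : ℕ} (F : BasedSeq n) {k : ℕ} (c : Fin (k + 1) → F.I)
    (m : Fin k → Zn n) : Prop :=
  ∀ ℓ : Fin k, m ℓ ∈ Eset F (c ℓ.succ) (c ℓ.castSucc)

/-- The vertex tuple `(x_{i_0}, x_{i_1}+m_1, …, x_{i_k}+m_1+⋯+m_k)` in `ℝ^n`. -/
def vtx {n : ℕ} (F : BasedSeq n) (x : F.I → Rn n) {k : ℕ}
    (c : Fin (k + 1) → F.I) (m : Fin k → Zn n) : Fin (k + 1) → Rn n :=
  fun a => x (c a) + zToR (∑ ℓ ∈ Finset.univ.filter (fun ℓ : Fin k => (ℓ : ℕ) < (a : ℕ)), m ℓ)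

/-- Membership in `X(F^•)_k`: the tuple `y` represents (mod a common `ℤ^n`-translation `t`)
one of the linear `k`-simplices `[x_{i_0}, x_{i_1}+m_1, …, x_{i_k}+m_1+⋯+m_k] mod ℤ^n`. -/
def InX {n : ℕ} (F : BasedSeq n) (x : F.I → Rn n) (k : ℕ)
    (y : Fin (k + 1) → Rn n) : Prop :=
  ∃ (c : Fin (k + 1) → F.I) (m : Fin k → Zn n) (t : Zn n),
    goodTuple F c m ∧ ∀ a, y a = vtx F x c m a + zToR t

/-- The integer lattice `ℤ^n ⊆ ℝ^n` as an additive subgroup. -/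
def intLattice (n : ℕ) : AddSubgroup (Rn n) :=
  AddSubgroup.pi Set.univ fun _ => AddSubgroup.zmultiples (1 : ℝ)

/-- The torus `T^n = ℝ^n/ℤ^n`. -/
abbrev Torus (n : ℕ) := Rn n ⧸ intLattice n

/-- The projection `π : ℝ^n → T^n`. -/
def toTorus {n : ℕ} : Rn n → Torus n := QuotientAddGroup.mk

/-- The tropical Lagrangian coamoeba `T(F^•) ⊆ T^n`. -/
def TropT {n : ℕ} (F : BasedSeq n) (x : F.I → Rn n) : Set (Torus n) :=
  ⋃ (k : ℕ), ⋃ (c : Fin (k + 1) → F.I), ⋃ (m : Fin k → Zn n), ⋃ (_ : goodTuple F c m),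
    toTorus '' convexHull ℝ (Set.range (vtx F x c m))

/-- The subset `S_i ⊆ ℝ^n`. -/
def Sset {n : ℕ} (F : BasedSeq n) (x : F.I → Rn n) (i : F.I) : Set (Rn n) :=
  ⋃ (k : ℕ), ⋃ (c : Fin (k + 1) → F.I), ⋃ (m : Fin k → Zn n),
    ⋃ (_ : c 0 = i ∧ goodTuple F c m), convexHull ℝ (Set.range (vtx F x c m))

/-- `[x, S] = {t·x + (1−t)·y : y ∈ S, t ∈ [0,1]}`. -/
def joinSet {n : ℕ} (x : Rn n) (S : Set (Rn n)) : Set (Rn n) :=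
  {p | ∃ y ∈ S, ∃ t ∈ Set.Icc (0 : ℝ) 1, p = t • x + (1 - t) • y}


/-! Splitting off the first vertex of the simplex `[x_i, x_{i_1}+m_1, …, x_{i_k}+m_1+⋯+m_k]`
writes its convex hull as the join of `x_i` with the `m_1`-translate of the simplex of the shorter
chain starting at `i_1`, so the family `S` satisfies the recursion. The recursion determines the
family, since `m ∈ E_{ji}` forces `deg j > deg i` and degrees are bounded above by `0`: induct on
`-deg`. -/

open Set
open scoped Pointwise

@[simp] lemma zToR_zero {n : ℕ} : zToR (0 : Zn n) = 0 := by
  funext j; simp [zToR]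

@[simp] lemma zToR_add {n : ℕ} (a b : Zn n) : zToR (a + b) = zToR a + zToR b := by
  funext j; simp [zToR]

lemma joinSet_eq_convexJoin {n : ℕ} (p : Rn n) (S : Set (Rn n)) :
    joinSet p S = convexJoin ℝ {p} S := by
  ext q
  simp only [joinSet, convexJoin_singleton_left, mem_iUnion, segment, mem_ofPred_eq]
  constructor
  · rintro ⟨y, hy, t, ⟨ht0, ht1⟩, rfl⟩
    exact ⟨y, hy, t, 1 - t, ht0, by linarith, by ring, rfl⟩
  · rintro ⟨y, hy, a, b, ha, hb, hab, rfl⟩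
    exact ⟨y, hy, a, ⟨ha, by linarith⟩, by rw [show b = 1 - a by linarith]⟩

lemma image_add_right_eq_vadd {E : Type*} [AddCommGroup E] (v : E) (s : Set E) :
    (fun y => y + v) '' s = v +ᵥ s := by
  simp only [← image_vadd, vadd_eq_add, add_comm v]

lemma convexHull_image_add_right {E : Type*} [AddCommGroup E] [Module ℝ E] (v : E) (s : Set E) :
    convexHull ℝ ((fun y => y + v) '' s) = (fun y => y + v) '' convexHull ℝ s := by
  simp only [image_add_right_eq_vadd, convexHull_vadd]

namespace BasedSeq

variable {n : ℕ} {F : BasedSeq n}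

lemma deg_lt_of_mem_Eset {i j : F.I} {m : Zn n} (h : m ∈ Eset F j i) : F.deg i < F.deg j := by
  induction h with
  | base _ _ => omega
  | step _ _ _ _ => omega

lemma goodTuple_cons_iff {k : ℕ} (i : F.I) (c : Fin (k + 1) → F.I) (m₀ : Zn n)
    (m : Fin k → Zn n) :
    goodTuple F (Fin.cons i c) (Fin.cons m₀ m) ↔
      m₀ ∈ Eset F (c 0) i ∧ goodTuple F c m := by
  simp [goodTuple, Fin.forall_fin_succ]

lemma wellFounded_deg_gt : WellFounded fun j i : F.I => F.deg i < F.deg j :=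
  (measure fun i => (-F.deg i).toNat).wf.mono fun j i h =>
    show (-F.deg j).toNat < (-F.deg i).toNat by have := F.deg_nonpos j; omega

variable (x : F.I → Rn n)

@[simp] lemma vtx_zero {k : ℕ} (c : Fin (k + 1) → F.I) (m : Fin k → Zn n) :
    vtx F x c m 0 = x (c 0) := by
  simp [vtx]

lemma vtx_cons_succ {k : ℕ} (i : F.I) (c : Fin (k + 1) → F.I) (m₀ : Zn n)
    (m : Fin k → Zn n) (a : Fin (k + 1)) :
    vtx F x (Fin.cons i c) (Fin.cons m₀ m) a.succ = vtx F x c m a + zToR m₀ := by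
  simp only [vtx, Finset.sum_filter, Fin.sum_univ_succ, Fin.cons_zero, Fin.cons_succ,
    Fin.val_zero, Fin.val_succ, Nat.succ_lt_succ_iff, Nat.succ_pos, if_true, zToR_add]
  abel

lemma range_vtx_cons {k : ℕ} (i : F.I) (c : Fin (k + 1) → F.I) (m₀ : Zn n)
    (m : Fin k → Zn n) :
    range (vtx F x (Fin.cons i c) (Fin.cons m₀ m)) =
      insert (x i) ((fun y => y + zToR m₀) '' range (vtx F x c m)) := by
  rw [Fin.range_fin_succ, vtx_zero, Fin.cons_zero, ← range_comp]
  congr 2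
  exact funext (vtx_cons_succ x i c m₀ m)

lemma convexHull_range_vtx_cons {k : ℕ} (i : F.I) (c : Fin (k + 1) → F.I) (m₀ : Zn n)
    (m : Fin k → Zn n) :
    convexHull ℝ (range (vtx F x (Fin.cons i c) (Fin.cons m₀ m))) =
      joinSet (x i) ((fun y => y + zToR m₀) '' convexHull ℝ (range (vtx F x c m))) := by
  rw [range_vtx_cons, convexHull_insert ((range_nonempty _).image _),
    convexHull_image_add_right, joinSet_eq_convexJoin]

lemma mem_Sset_iff {i : F.I} {p : Rn n} :
    p ∈ Sset F x i ↔ ∃ (k : ℕ) (c : Fin (k + 1) → F.I) (m : Fin k → Zn n),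
      c 0 = i ∧ goodTuple F c m ∧ p ∈ convexHull ℝ (range (vtx F x c m)) := by
  simp [Sset]

lemma mem_Sset_rec_iff {i : F.I} {p : Rn n} :
    p ∈ Sset F x i ↔ p = x i ∨ ∃ j, ∃ m₀ ∈ Eset F j i,
      p ∈ joinSet (x i) ((fun y => y + zToR m₀) '' Sset F x j) := by
  rw [mem_Sset_iff]
  constructor
  · rintro ⟨_ | k, c, m, rfl, hc, hp⟩
    · left
      rwa [Fin.range_fin_succ, range_eq_empty, insert_empty_eq, vtx_zero,
        convexHull_singleton] at hp
    · right
      rw [← Fin.cons_self_tail c, ← Fin.cons_self_tail m, goodTuple_cons_iff] at hc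
      rw [← Fin.cons_self_tail c, ← Fin.cons_self_tail m, convexHull_range_vtx_cons] at hp
      obtain ⟨_, ⟨y, hy, rfl⟩, t, ht, rfl⟩ := hp
      exact ⟨Fin.tail c 0, m 0, hc.1, _,
        mem_image_of_mem _ ((mem_Sset_iff x).2 ⟨k, _, _, rfl, hc.2, hy⟩), t, ht, rfl⟩
  · rintro (rfl | ⟨j, m₀, hm₀, hp⟩)
    · exact ⟨0, fun _ => i, Fin.elim0, rfl, fun ℓ => ℓ.elim0,
        subset_convexHull ℝ _ ⟨0, vtx_zero x _ _⟩⟩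
    · obtain ⟨_, ⟨y, hy, rfl⟩, t, ht, rfl⟩ := hp
      obtain ⟨k, c, m, rfl, hc, hy⟩ := (mem_Sset_iff x).1 hy
      refine ⟨k + 1, Fin.cons i c, Fin.cons m₀ m, rfl,
        (goodTuple_cons_iff i c m₀ m).2 ⟨hm₀, hc⟩, ?_⟩
      rw [convexHull_range_vtx_cons]
      exact ⟨_, mem_image_of_mem _ hy, t, ht, rfl⟩

lemma Sset_eq_rec (i : F.I) :
    Sset F x i = {x i} ∪ ⋃ (j : F.I), ⋃ m ∈ Eset F j i,
      joinSet (x i) ((fun y => y + zToR m) '' Sset F x j) := by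
  ext p
  simp only [mem_Sset_rec_iff, mem_union, mem_singleton_iff, mem_iUnion, exists_prop]

end BasedSeq

theorem stmt9_general (n : ℕ) (F : BasedSeq n) (x : F.I → Rn n)
    (T : F.I → Set (Rn n))
    (hT : ∀ i : F.I, T i = {x i} ∪ ⋃ (j : F.I), ⋃ m ∈ Eset F j i,
      joinSet (x i) ((fun y => y + zToR m) '' T j)) :
    ∀ i : F.I, T i = Sset F x i := by
  intro i
  induction i using BasedSeq.wellFounded_deg_gt.induction with
  | _ i ih =>
    rw [hT i, BasedSeq.Sset_eq_rec]
    exact congrArg _ <| iUnion_congr fun j => iUnion₂_congr fun m hm => by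
      rw [ih j (BasedSeq.deg_lt_of_mem_Eset hm)]

/-- the sets `S_i` are uniquely characterized by their recursion. -/
theorem stmt9 (n : ℕ) (hn : 1 ≤ n) (F : BasedSeq n) (x : F.I → Rn n)
    (T : F.I → Set (Rn n))
    (hT : ∀ i : F.I, T i = {x i} ∪ ⋃ (j : F.I), ⋃ m ∈ Eset F j i,
      joinSet (x i) ((fun y => y + zToR m) '' T j)) :
    ∀ i : F.I, T i = Sset F x i :=
  stmt9_general n F x T hT

end
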